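/- Combining the clique bound and correctness: under the syndrome-graph decoding setting with N ≥ T + ⌊T²/4⌋ + 2 and at most T altered packets, the decoder identifies a set V* of at least N − T − ⌊T²/4⌋ − 1 indices i with ȳ_i = y_i. -/

import Mathlib

/-!
Since every `N - T` rows of `A` are independent, a vector orthogonal to `N - T` of the `y i` is
orthogonal to all of them. The unaltered indices `G` form a clique of size at least `N - T`, so a
vertex `i` of `V*` is adjacent to all of `G`: then `ybar i - y i` is orthogonal to every `y k`,
and together with the self-loop `‖ybar i‖ = ‖y i‖` this forces `ybar i = y i`.

A vertex of `G` is missing from `V*` only if it is a non-neighbour of some altered clique-eligible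
vertex `j`. Put `t = #G - (N - T)`. Each such `j` has at least `t + 1` non-neighbours in `G`,
while a clique of size `≥ N - T` through `j` with `c` altered members has at most `t + c` of them.
Covering the `b` altered eligible vertices greedily by these cliques, starting from one with the
largest number `c` of altered members, bounds the missed vertices by
`t + c + (b - c) max (t + 1) (c - 1)`: a later clique meeting an earlier one adds at most `c - 1`.
AM-GM turns this into `T + ⌊T² / 4⌋ + 1` for the altered and missed vertices together.
-/

open scoped RealInnerProductSpace

open Finset Matrix

section

open scoped Classical

theorem Matrix.eq_zero_of_le_card_filter_mulVec_eq_zero {m κ K : Type*} [Fintype m] [Fintype κ]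
    [DecidableEq κ] [Field K] (A : Matrix m κ K)
    (hA : ∀ e : κ → m, Function.Injective e → (A.submatrix e id).det ≠ 0) {c : κ → K}
    (hc : Fintype.card κ ≤ #{i | (A *ᵥ c) i = 0}) : c = 0 := by
  rw [← Fintype.card_coe] at hc
  obtain ⟨f⟩ := Function.Embedding.nonempty_of_card_le hc
  refine eq_zero_of_mulVec_eq_zero (hA _ (Subtype.val_injective.comp f.injective)) ?_
  funext k
  exact (mem_filter.mp (f k).2).2

theorem inner_eq_zero_of_le_card_filter_inner_eq_zero {ι κ E : Type*} [Fintype ι] [Fintype κ]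
    [DecidableEq κ] [NormedAddCommGroup E] [InnerProductSpace ℝ E] (A : Matrix ι κ ℝ)
    (hA : ∀ e : κ → ι, Function.Injective e → (A.submatrix e id).det ≠ 0) {x : κ → E}
    {y : ι → E} (hy : ∀ i, y i = ∑ j, A i j • x j) {v : E}
    (hv : Fintype.card κ ≤ #{i | ⟪v, y i⟫ = 0}) (i : ι) : ⟪v, y i⟫ = 0 := by
  have hinner : ∀ i, ⟪v, y i⟫ = (A *ᵥ fun j => ⟪v, x j⟫) i := fun i => by
    simp [hy, inner_sum, real_inner_smul_right, mulVec, dotProduct]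
  simp only [hinner] at hv ⊢
  rw [A.eq_zero_of_le_card_filter_mulVec_eq_zero hA hv, mulVec_zero, Pi.zero_apply]

end

theorem eq_of_inner_self_eq_of_inner_sub_eq_zero {E : Type*} [NormedAddCommGroup E]
    [InnerProductSpace ℝ E] {u w : E} (h : ⟪u, u⟫ = ⟪w, w⟫) (h' : ⟪u - w, w⟫ = 0) : u = w := by
  have hpyth := norm_add_sq_eq_norm_sq_add_norm_sq_real h'
  simp only [sub_add_cancel, ← real_inner_self_eq_norm_mul_norm, h] at hpyth
  exact sub_eq_zero.mp (inner_self_eq_zero (𝕜 := ℝ) |>.mp (by linarith))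

theorem add_add_mul_max_le {b c d t T : ℕ} (hc : 1 ≤ c) (hcb : c ≤ b) (hbd : b ≤ d)
    (hT : d + t ≤ T) : d + (t + c + (b - c) * max (t + 1) (c - 1)) ≤ T + T ^ 2 / 4 + 1 := by
  obtain ⟨e, rfl⟩ := Nat.exists_eq_add_of_le hcb
  obtain ⟨p, rfl⟩ := Nat.exists_eq_add_of_le' hc
  rw [Nat.add_sub_cancel_left, Nat.add_sub_cancel]
  rcases le_total p (t + 1) with hpt | htp
  · -- `d (t + 2) ≤ (T + 2)² / 4` by AM-GM
    have hTsq : (T + 2) ^ 2 / 4 = T + T ^ 2 / 4 + 1 := by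
      rw [show (T + 2) ^ 2 = T ^ 2 + (T + 1) * 4 by ring, Nat.add_mul_div_right _ _ (by norm_num)]
      omega
    rw [max_eq_left hpt, ← hTsq, Nat.le_div_iff_mul_le (by norm_num)]
    nlinarith [sq_nonneg ((d : ℤ) - t - 2)]
  · -- `p (e + 1) ≤ (p + e + 1)² / 4 ≤ T² / 4` by AM-GM
    have hpe : p * (e + 1) ≤ T ^ 2 / 4 := by
      rw [Nat.le_div_iff_mul_le (by norm_num)]
      nlinarith [sq_nonneg ((p : ℤ) - e - 1)]
    rw [max_eq_right htp]
    nlinarith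

section Cover

variable {ι α : Type*} [DecidableEq ι] [DecidableEq α] (X : ι → Finset α) {t M : ℕ}

theorem card_biUnion_sdiff_biUnion_le_of_mem (htM : t + 1 ≤ M) {C S : Finset ι} {j : ι}
    (hjC : j ∈ C) (hjS : j ∉ S) (hCM : #C ≤ M + 1) (hCX : #(C.biUnion X) ≤ t + #C)
    (hX : ∀ k ∈ C, t + 1 ≤ #(X k)) :
    #(C.biUnion X \ S.biUnion X) ≤ #(C \ S) * M := by
  have hjCS : 1 ≤ #(C \ S) := card_pos.mpr ⟨j, mem_sdiff.mpr ⟨hjC, hjS⟩⟩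
  by_cases hdisj : Disjoint C S
  · rw [sdiff_eq_self_of_disjoint hdisj] at hjCS ⊢
    calc #(C.biUnion X \ S.biUnion X) ≤ t + #C := (card_le_card sdiff_subset).trans hCX
      _ ≤ #C * (t + 1) := by nlinarith
      _ ≤ #C * M := Nat.mul_le_mul_left _ htM
  · obtain ⟨k, hkC, hkS⟩ := not_disjoint_iff.mp hdisj
    have hXk : X k ⊆ C.biUnion X := subset_biUnion_of_mem X hkC
    calc #(C.biUnion X \ S.biUnion X) ≤ #(C.biUnion X \ X k) :=
          card_le_card (sdiff_subset_sdiff subset_rfl (subset_biUnion_of_mem X hkS))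
      _ = #(C.biUnion X) - #(X k) := card_sdiff_of_subset hXk
      _ ≤ M := by have := hX k hkC; omega
      _ ≤ #(C \ S) * M := Nat.le_mul_of_pos_left M hjCS

theorem card_biUnion_sdiff_biUnion_le (htM : t + 1 ≤ M) {B : Finset ι}
    (hX : ∀ j ∈ B, t + 1 ≤ #(X j))
    (hC : ∀ j ∈ B, ∃ C ⊆ B, j ∈ C ∧ #C ≤ M + 1 ∧ #(C.biUnion X) ≤ t + #C) (S : Finset ι) :
    #(B.biUnion X \ S.biUnion X) ≤ #(B \ S) * M := by
  induction hBS : #(B \ S) using Nat.strong_induction_on generalizing S with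
  | _ r ih =>
    obtain ⟨j, hj⟩ | hBS0 := (B \ S).eq_empty_or_nonempty.symm
    · obtain ⟨hjB, hjS⟩ := mem_sdiff.mp hj
      obtain ⟨C, hCB, hjC, hCM, hCX⟩ := hC j hjB
      have hsplit : #(B \ S) = #(B \ (S ∪ C)) + #(C \ S) := by
        rw [← card_union_of_disjoint (disjoint_left.mpr fun a ha ha' =>
          (mem_sdiff.mp ha).2 (mem_union_right S (mem_sdiff.mp ha').1))]
        congr 1
        ext a
        have := @hCB a
        simp only [mem_sdiff, mem_union]
        tauto
      have hlt : #(B \ (S ∪ C)) < r := by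
        have := card_pos.mpr ⟨j, mem_sdiff.mpr ⟨hjC, hjS⟩⟩
        omega
      calc #(B.biUnion X \ S.biUnion X)
          ≤ #(B.biUnion X \ (S ∪ C).biUnion X) + #(C.biUnion X \ S.biUnion X) := by
            refine (card_le_card ?_).trans (card_union_le _ _)
            intro a ha
            rw [union_biUnion]
            simp only [mem_sdiff, mem_union] at ha ⊢
            tauto
        _ ≤ #(B \ (S ∪ C)) * M + #(C \ S) * M :=
            add_le_add (ih _ hlt _ rfl) (card_biUnion_sdiff_biUnion_le_of_mem X htM hjC hjS hCM
              hCX fun k hk => hX k (hCB hk))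
        _ = r * M := by rw [← add_mul, ← hsplit, hBS]
    · rw [← hBS, hBS0, card_empty, zero_mul, Nat.le_zero, card_eq_zero, sdiff_eq_empty_iff_subset]
      exact biUnion_subset_biUnion_of_subset_left X (sdiff_eq_empty_iff_subset.mp hBS0)

theorem add_card_biUnion_le {B : Finset ι} {d T : ℕ} (hB : #B ≤ d) (hT : d + t ≤ T)
    (hX : ∀ j ∈ B, t + 1 ≤ #(X j)) (hC : ∀ j ∈ B, ∃ C ⊆ B, j ∈ C ∧ #(C.biUnion X) ≤ t + #C) :
    d + #(B.biUnion X) ≤ T + T ^ 2 / 4 + 1 := by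
  obtain rfl | hBne := B.eq_empty_or_nonempty
  · rw [biUnion_empty, card_empty]
    omega
  choose! C hCB hjC hCX using hC
  obtain ⟨j₀, hj₀, hc⟩ := B.exists_mem_eq_sup hBne fun j => #(C j)
  set c := B.sup fun j => #(C j)
  have hCc : ∀ j ∈ B, #(C j) ≤ max (t + 1) (c - 1) + 1 := fun j hj => by
    have := le_sup (f := fun j => #(C j)) hj
    have := le_max_right (t + 1) (c - 1)
    omega
  have hcover := card_biUnion_sdiff_biUnion_le X (le_max_left (t + 1) (c - 1)) hX
    (fun j hj => ⟨C j, hCB j hj, hjC j hj, hCc j hj, hCX j hj⟩) (C j₀)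
  rw [card_sdiff_of_subset (hCB j₀ hj₀), ← hc] at hcover
  calc d + #(B.biUnion X)
      ≤ d + (#((C j₀).biUnion X) + #(B.biUnion X \ (C j₀).biUnion X)) := by
        have := card_le_card_sdiff_add_card (s := B.biUnion X) (t := (C j₀).biUnion X)
        omega
    _ ≤ d + (t + c + (#B - c) * max (t + 1) (c - 1)) := by
        have := hCX j₀ hj₀
        omega
    _ ≤ T + T ^ 2 / 4 + 1 :=
        add_add_mul_max_le (hc ▸ card_pos.mpr ⟨j₀, hjC j₀ hj₀⟩) (hc ▸ card_le_card (hCB j₀ hj₀))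
          hB hT

end Cover

section Clique

open scoped Classical

variable {ι : Type*} (R : ι → ι → Prop) (n : ℕ)

def cliqueEligible : Set ι :=
  {i | ∃ s : Finset ι, (∀ a ∈ s, ∀ b ∈ s, R a b) ∧ n ≤ #s ∧ i ∈ s}

def decodedSet : Set ι :=
  {i ∈ cliqueEligible R n | R i i ∧ ∀ j ∈ cliqueEligible R n, R i j}

noncomputable def nonNeighbors (G : Finset ι) (j : ι) : Finset ι := {g ∈ G | ¬R g j}

variable {R n}

theorem subset_cliqueEligible {s : Finset ι} (hs : ∀ a ∈ s, ∀ b ∈ s, R a b) (hn : n ≤ #s) :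
    ↑s ⊆ cliqueEligible R n :=
  fun _ hi => ⟨s, hs, hn, hi⟩

theorem card_biUnion_nonNeighbors_add_card_le {s G : Finset ι} (hs : ∀ a ∈ s, ∀ b ∈ s, R a b) :
    #((s \ G).biUnion (nonNeighbors R G)) + #s ≤ #G + #(s \ G) := by
  have hdisj : Disjoint ((s \ G).biUnion (nonNeighbors R G)) (s ∩ G) := by
    refine disjoint_left.mpr fun g hg hgs => ?_
    obtain ⟨j, hj, hgj⟩ := mem_biUnion.mp hg
    exact (mem_filter.mp hgj).2 (hs g (mem_inter.mp hgs).1 j (mem_sdiff.mp hj).1)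
  have hsub : (s \ G).biUnion (nonNeighbors R G) ∪ s ∩ G ⊆ G :=
    union_subset (biUnion_subset.mpr fun _ _ => filter_subset _ _) inter_subset_right
  have := card_le_card hsub
  rw [card_union_of_disjoint hdisj] at this
  have := card_sdiff_add_card_inter s G
  omega

theorem sdiff_biUnion_nonNeighbors_subset_decodedSet [Fintype ι] {G : Finset ι}
    (hG : ∀ a ∈ G, ∀ b ∈ G, R a b) (hn : n ≤ #G) :
    ↑(G \ ({j | j ∈ cliqueEligible R n ∧ j ∉ G} : Finset ι).biUnion (nonNeighbors R G)) ⊆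
      decodedSet R n := by
  intro i hi
  obtain ⟨hiG, hiX⟩ := mem_sdiff.mp hi
  refine ⟨subset_cliqueEligible hG hn hiG, hG i hiG i hiG, fun j hj => ?_⟩
  by_cases hjG : j ∈ G
  · exact hG i hiG j hjG
  · by_contra hij
    exact hiX (mem_biUnion.mpr
      ⟨j, mem_filter.mpr ⟨mem_univ j, hj, hjG⟩, mem_filter.mpr ⟨hiG, hij⟩⟩)

theorem exists_subset_card_biUnion_nonNeighbors_le [Fintype ι] {G : Finset ι} {j : ι}
    (hj : j ∈ cliqueEligible R n) (hjG : j ∉ G) :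
    ∃ C ⊆ ({j | j ∈ cliqueEligible R n ∧ j ∉ G} : Finset ι),
      j ∈ C ∧ #(C.biUnion (nonNeighbors R G)) ≤ #G - n + #C := by
  obtain ⟨s, hs, hns, hjs⟩ := hj
  refine ⟨s \ G, fun k hk => ?_, mem_sdiff.mpr ⟨hjs, hjG⟩, ?_⟩
  · obtain ⟨hks, hkG⟩ := mem_sdiff.mp hk
    exact mem_filter.mpr ⟨mem_univ k, subset_cliqueEligible hs hns hks, hkG⟩
  · have := card_biUnion_nonNeighbors_add_card_le (G := G) hs
    omega

end Clique

section Syndrome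

open scoped Classical

noncomputable def unalteredSet {ι E : Type*} [Fintype ι] (y ybar : ι → E) : Finset ι :=
  {i | ybar i = y i}

theorem mem_unalteredSet {ι E : Type*} [Fintype ι] {y ybar : ι → E} {i : ι} :
    i ∈ unalteredSet y ybar ↔ ybar i = y i := by
  simp [unalteredSet]

variable {ι E : Type*} [NormedAddCommGroup E] [InnerProductSpace ℝ E] (y ybar : ι → E)

def syndromeAdj (i j : ι) : Prop := ⟪ybar i, ybar j⟫ = ⟪y i, y j⟫

variable {y ybar}

theorem syndromeAdj.symm {i j : ι} (h : syndromeAdj y ybar i j) : syndromeAdj y ybar j i := by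
  rw [syndromeAdj, real_inner_comm, h, real_inner_comm]

theorem syndromeAdj_of_mem_unalteredSet [Fintype ι] {a b : ι} (ha : a ∈ unalteredSet y ybar)
    (hb : b ∈ unalteredSet y ybar) : syndromeAdj y ybar a b := by
  rw [syndromeAdj, mem_unalteredSet.mp ha, mem_unalteredSet.mp hb]

theorem inner_sub_eq_zero_of_syndromeAdj {i g : ι} (hg : ybar g = y g)
    (h : syndromeAdj y ybar i g) : ⟪ybar i - y i, y g⟫ = 0 := by
  rw [syndromeAdj, hg] at h
  rw [inner_sub_left, h, sub_self]

variable [Fintype ι] {n : ℕ}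

theorem decodedSet_subset_unalteredSet
    (hgen : ∀ v : E, n ≤ #{i | ⟪v, y i⟫ = 0} → ∀ i, ⟪v, y i⟫ = 0)
    (hG : n ≤ #(unalteredSet y ybar)) :
    decodedSet (syndromeAdj y ybar) n ⊆ unalteredSet y ybar := by
  rintro i ⟨-, hii, hi⟩
  have hGe := subset_cliqueEligible (fun _ ha _ hb => syndromeAdj_of_mem_unalteredSet ha hb) hG
  have horth : ∀ k, ⟪ybar i - y i, y k⟫ = 0 := by
    refine hgen _ (hG.trans (card_le_card fun g hg => mem_filter.mpr ⟨mem_univ g, ?_⟩))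
    exact inner_sub_eq_zero_of_syndromeAdj (mem_unalteredSet.mp hg) (hi g (hGe hg))
  exact mem_unalteredSet.mpr (eq_of_inner_self_eq_of_inner_sub_eq_zero hii (horth i))

theorem card_unalteredSet_lt_card_nonNeighbors_add
    (hgen : ∀ v : E, n ≤ #{i | ⟪v, y i⟫ = 0} → ∀ i, ⟪v, y i⟫ = 0) {j : ι}
    (hjj : syndromeAdj y ybar j j) (hj : ybar j ≠ y j) :
    #(unalteredSet y ybar) <
      #(nonNeighbors (syndromeAdj y ybar) (unalteredSet y ybar) j) + n := by
  have hv : ⟪ybar j - y j, y j⟫ ≠ 0 := fun h =>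
    hj (eq_of_inner_self_eq_of_inner_sub_eq_zero hjj h)
  have hzero : #{i | ⟪ybar j - y j, y i⟫ = 0} < n := by
    by_contra! h
    exact hv (hgen _ h j)
  have hsub : unalteredSet y ybar \ nonNeighbors (syndromeAdj y ybar) (unalteredSet y ybar) j ⊆
      ({i | ⟪ybar j - y j, y i⟫ = 0} : Finset ι) := by
    intro g hg
    simp only [nonNeighbors, mem_sdiff, mem_filter, not_and, not_not] at hg
    exact mem_filter.mpr ⟨mem_univ g,
      inner_sub_eq_zero_of_syndromeAdj (mem_unalteredSet.mp hg.1) (hg.2 hg.1).symm⟩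
  have := card_le_card hsub
  have := card_le_card_sdiff_add_card (s := unalteredSet y ybar)
    (t := nonNeighbors (syndromeAdj y ybar) (unalteredSet y ybar) j)
  omega

theorem card_sub_le_ncard_decodedSet
    (hgen : ∀ v : E, n ≤ #{i | ⟪v, y i⟫ = 0} → ∀ i, ⟪v, y i⟫ = 0)
    (hG : n ≤ #(unalteredSet y ybar)) {T : ℕ} (hT : Fintype.card ι ≤ n + T) :
    Fintype.card ι - (T + T ^ 2 / 4 + 1) ≤ (decodedSet (syndromeAdj y ybar) n).ncard := by
  set G := unalteredSet y ybar with hGdef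
  set R := syndromeAdj y ybar with hRdef
  set B : Finset ι := {j | j ∈ cliqueEligible R n ∧ j ∉ G}
  have hBG : #B ≤ #Gᶜ := card_le_card fun j hj => mem_compl.mpr (mem_filter.mp hj).2.2
  have hX : ∀ j ∈ B, #G - n + 1 ≤ #(nonNeighbors R G j) := fun j hj => by
    obtain ⟨⟨s, hs, -, hjs⟩, hjG⟩ := (mem_filter.mp hj).2
    have := card_unalteredSet_lt_card_nonNeighbors_add hgen (hs j hjs j hjs)
      (mt mem_unalteredSet.mpr hjG)
    rw [← hGdef, ← hRdef] at this
    omega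
  have hdT : #Gᶜ + (#G - n) ≤ T := by
    rw [card_compl]
    have := card_le_univ G
    omega
  have hbound := add_card_biUnion_le (nonNeighbors R G) hBG hdT hX fun j hj =>
    exists_subset_card_biUnion_nonNeighbors_le (mem_filter.mp hj).2.1
      (mem_filter.mp hj).2.2
  have hdecoded := sdiff_biUnion_nonNeighbors_subset_decodedSet
    (fun _ ha _ hb => syndromeAdj_of_mem_unalteredSet ha hb) hG
  calc Fintype.card ι - (T + T ^ 2 / 4 + 1) ≤ #(G \ B.biUnion (nonNeighbors R G)) := by
        have := le_card_sdiff (B.biUnion (nonNeighbors R G)) G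
        rw [card_compl] at hbound hdT
        omega
    _ = (↑(G \ B.biUnion (nonNeighbors R G)) : Set ι).ncard := (Set.ncard_coe_finset _).symm
    _ ≤ (decodedSet R n).ncard := Set.ncard_le_ncard hdecoded

end Syndrome

theorem stmt_12_general (N T N₀ : ℕ)
    (A : Matrix (Fin N) (Fin (N - T)) ℝ)
    (hA : ∀ e : Fin (N - T) → Fin N, Function.Injective e →
      (Matrix.of fun i j : Fin (N - T) => A (e i) j).det ≠ 0)
    (x : Fin (N - T) → EuclideanSpace ℝ (Fin N₀))
    (y ybar : Fin N → EuclideanSpace ℝ (Fin N₀))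
    (hy : ∀ i, y i = ∑ j, A i j • x j)
    (hunalt : ∃ U : Finset (Fin N), N - T ≤ U.card ∧ ∀ i ∈ U, ybar i = y i)
    (Edge : Fin N → Fin N → Prop)
    (hEdge : ∀ i j, Edge i j ↔ ⟪ybar i, ybar j⟫ = ⟪y i, y j⟫)
    (V' : Set (Fin N))
    (hV' : V' = {i : Fin N | ∃ s : Finset (Fin N),
      (∀ a ∈ s, ∀ b ∈ s, Edge a b) ∧ N - T ≤ s.card ∧ i ∈ s})
    (Vstar : Set (Fin N))
    (hVstar : Vstar = {i ∈ V' | Edge i i ∧ ∀ j ∈ V', Edge i j}) :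
    N - (T + T ^ 2 / 4 + 1) ≤ Vstar.ncard ∧ ∀ i ∈ Vstar, ybar i = y i := by
  obtain rfl : V' = cliqueEligible Edge (N - T) := hV'
  obtain rfl : Vstar = decodedSet Edge (N - T) := hVstar
  obtain rfl : Edge = syndromeAdj y ybar := funext₂ fun i j => propext (hEdge i j)
  classical
  have hgen : ∀ v, N - T ≤ #{i | ⟪v, y i⟫ = 0} → ∀ i, ⟪v, y i⟫ = 0 := fun v hv =>
    inner_eq_zero_of_le_card_filter_inner_eq_zero A hA hy (by simpa using hv)
  obtain ⟨U, hU, hUy⟩ := hunalt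
  have hG : N - T ≤ #(unalteredSet y ybar) :=
    hU.trans (card_le_card fun i hi => mem_unalteredSet.mpr (hUy i hi))
  refine ⟨?_, fun i hi => mem_unalteredSet.mp (decodedSet_subset_unalteredSet hgen hG hi)⟩
  simpa using card_sub_le_ncard_decodedSet hgen hG (T := T) (by simp; omega)

/-- Combining the clique bound and correctness: with
N ≥ T + ⌊T²/4⌋ + 2 and at most T altered packets, the decoder's set V*
has at least N - T - ⌊T²/4⌋ - 1 indices i, all with ȳ_i = y_i. -/
theorem stmt_12 (N T N₀ : ℕ) (hT : 1 ≤ T) (hN : T + T ^ 2 / 4 + 2 ≤ N)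
    (A : Matrix (Fin N) (Fin (N - T)) ℝ)
    (hA : ∀ e : Fin (N - T) → Fin N, Function.Injective e →
      (Matrix.of fun i j : Fin (N - T) => A (e i) j).det ≠ 0)
    (x : Fin (N - T) → EuclideanSpace ℝ (Fin N₀))
    (y ybar : Fin N → EuclideanSpace ℝ (Fin N₀))
    (hy : ∀ i, y i = ∑ j, A i j • x j)
    (hunalt : ∃ U : Finset (Fin N), N - T ≤ U.card ∧ ∀ i ∈ U, ybar i = y i)
    (Edge : Fin N → Fin N → Prop)
    (hEdge : ∀ i j, Edge i j ↔ ⟪ybar i, ybar j⟫ = ⟪y i, y j⟫)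
    (V' : Set (Fin N))
    (hV' : V' = {i : Fin N | ∃ s : Finset (Fin N),
      (∀ a ∈ s, ∀ b ∈ s, Edge a b) ∧ N - T ≤ s.card ∧ i ∈ s})
    (Vstar : Set (Fin N))
    (hVstar : Vstar = {i ∈ V' | Edge i i ∧ ∀ j ∈ V', Edge i j}) :
    N - (T + T ^ 2 / 4 + 1) ≤ Vstar.ncard ∧ ∀ i ∈ Vstar, ybar i = y i :=
  stmt_12_general N T N₀ A hA x y ybar hy hunalt Edge hEdge V' hV' Vstar hVstar
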